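/- If A is a computably enumerable subset of ℕ that has an asymptotic density, then for every real ε > 0 there is a computable set B ⊆ A such that the upper density of the symmetric difference A △ B is less than ε. -/

import Mathlib

open Filter

noncomputable def pdens (S : Set ℕ) (n : ℕ) : ℝ := (S ∩ Set.Iio n).ncard / n

noncomputable def lowerDensity (S : Set ℕ) : ℝ := liminf (pdens S) atTop

noncomputable def upperDensity (S : Set ℕ) : ℝ := limsup (pdens S) atTop

/-!
Enumerate `A` in stages `A_s`. For a rational `q` slightly below `d` and a suitable constant `K`,
`m ↦ ⌊q m⌋₊ - K` is a computable lower bound for `|A ∩ [0, m)|` that falls short of it by at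
most `η m + C`. For each dyadic level `j`, an unbounded search finds a stage `s_j` whose
enumeration below `2 ^ (j + 1)` already reaches this bound, and `B` keeps an element `x` of `A`
exactly when `x` is enumerated by stage `s_(log₂ x)`. Then `B ⊆ A` is computable, and the
elements of `A \ B` below `n` number at most
`∑_{j ≤ log₂ n} (η 2 ^ (j + 1) + C) ≤ 4 η n + O(log n)`.
-/

open Nat.Partrec (Code)
open Topology

noncomputable def countBelow (S : Set ℕ) (n : ℕ) : ℕ := (S ∩ Set.Iio n).ncard

theorem countBelow_le (S : Set ℕ) (n : ℕ) : countBelow S n ≤ n :=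
  (Set.ncard_le_ncard Set.inter_subset_right).trans_eq (Set.ncard_Iio_nat n)

theorem countBelow_sdiff {S T : Set ℕ} (h : T ⊆ S) (n : ℕ) :
    countBelow (S \ T) n = countBelow S n - countBelow T n := by
  rw [countBelow, Set.inter_sdiff_distrib_right, Set.ncard_sdiff (Set.inter_subset_inter_left _ h)
    ((Set.finite_Iio n).inter_of_right T)]
  rfl

theorem pdens_eq_countBelow_div (S : Set ℕ) (n : ℕ) : pdens S n = countBelow S n / n := rfl

theorem pdens_nonneg (S : Set ℕ) (n : ℕ) : 0 ≤ pdens S n := by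
  rw [pdens_eq_countBelow_div]; positivity

theorem Primrec.nat_pow : Primrec₂ ((· ^ ·) : ℕ → ℕ → ℕ) :=
  Primrec₂.unpaired'.1 Nat.Primrec.pow

theorem Computable.nat_log {b : ℕ} (hb : 1 < b) : Computable (Nat.log b) := by
  have hex : ∀ x, ∃ k, x < b ^ (k + 1) :=
    fun x => ⟨Nat.log b x, Nat.lt_pow_succ_log_self hb x⟩
  have hfind : Computable fun x => Nat.find (hex x) :=
    Computable.find (Primrec.nat_lt.comp Primrec.fst
      (Primrec.nat_pow.comp (Primrec.const b) (Primrec.succ.comp Primrec.snd))).computablePred hex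
  refine hfind.of_eq fun x =>
    (Nat.find_eq_iff _).2 ⟨Nat.lt_pow_succ_log_self hb x, fun k hk hx => ?_⟩
  have : Nat.log b x < k + 1 := Nat.log_lt_of_lt_pow (by rintro rfl; simp at hk) hx
  omega

theorem Primrec.nat_floor_ratCast_mul (q : ℚ) : Primrec fun m : ℕ => ⌊(q : ℝ) * m⌋₊ := by
  refine (Primrec.nat_div.comp (Primrec.nat_mul.comp (Primrec.const q.num.toNat) Primrec.id)
    (Primrec.const q.den)).of_eq fun m => ?_
  rcases le_or_gt 0 q with hq | hq
  · have hnum : ((q.num.toNat : ℤ) : ℝ) = q.num := by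
      exact_mod_cast Int.toNat_of_nonneg (Rat.num_nonneg.2 hq)
    rw [← Nat.floor_div_eq_div (K := ℝ), Rat.cast_def, ← hnum]
    push_cast [id]
    ring_nf
  · have hnum : q.num.toNat = 0 := Int.toNat_of_nonpos (Rat.num_neg.2 hq).le
    rw [hnum, zero_mul, Nat.zero_div, eq_comm, Nat.floor_eq_zero]
    have : (q : ℝ) * m ≤ 0 := mul_nonpos_of_nonpos_of_nonneg (by exact_mod_cast hq.le) m.cast_nonneg
    linarith

theorem countBelow_setOf_eq_length (f : ℕ → Bool) (n : ℕ) :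
    countBelow {x | f x = true} n = ((List.range n).filter f).length := by
  have : {x | f x = true} ∩ Set.Iio n = ↑((Finset.range n).filter fun x => f x = true) := by
    ext x; simp [and_comm]
  rw [countBelow, this, Set.ncard_coe_finset]
  simp [Finset.card, Multiset.range, Multiset.filter_coe]

theorem Primrec₂.countBelow_setOf {e : ℕ → ℕ → Bool} (he : Primrec₂ e) :
    Primrec₂ fun s n => countBelow {x | e s x = true} n := by
  have hR : PrimrecRel fun x s => e s x = true :=
    Primrec.eq.comp (he.comp Primrec.snd Primrec.fst) (Primrec.const true)
  refine Primrec₂.of_eq ?_ fun s n => (countBelow_setOf_eq_length (e s) n).symm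
  exact (Primrec.list_length.comp ((PrimrecRel.listFilter hR).comp
    (Primrec.list_range.comp Primrec.snd) Primrec.fst)).of_eq fun _ => by simp

theorem REPred.exists_enumeration {p : ℕ → Prop} (hp : REPred p) :
    ∃ e : ℕ → ℕ → Bool, Primrec₂ e ∧ (∀ x, Monotone (e · x)) ∧
      ∀ x, p x ↔ ∃ s, e s x = true := by
  obtain ⟨c, hc⟩ := Code.exists_code.1 (Partrec.nat_iff.1 (hp.map (Computable.const 0).to₂))
  refine ⟨fun s x => (Code.evaln s c x).isSome, ?_, fun x s t hst => ?_, fun x => ?_⟩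
  · exact Primrec.option_isSome.comp
      (Code.primrec_evaln.comp ((Primrec.fst.pair (Primrec.const c)).pair Primrec.snd))
  · refine Bool.le_iff_imp.2 fun h => ?_
    obtain ⟨y, hy⟩ := Option.isSome_iff_exists.1 h
    exact Option.isSome_iff_exists.2 ⟨y, Code.evaln_mono hst hy⟩
  · have hdom : p x ↔ (Code.eval c x).Dom := by simp [hc, Part.assert]
    simp only [hdom, Part.dom_iff_mem, Code.evaln_complete, Option.isSome_iff_exists]
    exact ⟨fun ⟨y, s, hs⟩ => ⟨s, y, hs⟩, fun ⟨s, y, hs⟩ => ⟨y, s, hs⟩⟩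

theorem exists_stage_inter_Iio_subset {A : Set ℕ} {e : ℕ → ℕ → Bool} (he : ∀ x, Monotone (e · x))
    (heA : ∀ x, x ∈ A ↔ ∃ s, e s x = true) (n : ℕ) :
    ∃ s, A ∩ Set.Iio n ⊆ {x | e s x = true} := by
  have hx : ∀ x ∈ Finset.range n, ∀ᶠ s in atTop, x ∈ A → e s x = true := by
    intro x _
    by_cases hxA : x ∈ A
    · obtain ⟨s, hs⟩ := (heA x).1 hxA
      filter_upwards [eventually_ge_atTop s] with t hst
      exact fun _ => Bool.le_iff_imp.1 (he x hst) hs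
    · exact Eventually.of_forall fun _ h => absurd h hxA
  obtain ⟨s, hs⟩ := ((Finset.range n).eventually_all.2 hx).exists
  exact ⟨s, fun x ⟨hxA, hxn⟩ => hs x (Finset.mem_range.2 hxn) hxA⟩

theorem exists_computable_subset_countBelow_sdiff_le {A : Set ℕ} (hA : REPred (· ∈ A))
    {L : ℕ → ℕ} (hL : Computable L) (hLA : ∀ m, L m ≤ countBelow A m) :
    ∃ B : Set ℕ, ComputablePred (· ∈ B) ∧ B ⊆ A ∧ ∀ n, countBelow (A \ B) n ≤
      ∑ j ∈ Finset.range (Nat.log 2 n + 1), (countBelow A (2 ^ (j + 1)) - L (2 ^ (j + 1))) := by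
  obtain ⟨e, he, hmono, heA⟩ := hA.exists_enumeration
  have hsub : ∀ s, {x | e s x = true} ⊆ A := fun s x hx => (heA x).2 ⟨s, hx⟩
  have hstage : ∀ j, ∃ s, L (2 ^ (j + 1)) ≤ countBelow {x | e s x = true} (2 ^ (j + 1)) := by
    intro j
    obtain ⟨s, hs⟩ := exists_stage_inter_Iio_subset hmono heA (2 ^ (j + 1))
    refine ⟨s, (hLA _).trans ?_⟩
    exact Set.ncard_le_ncard (Set.subset_inter hs Set.inter_subset_right)
      ((Set.finite_Iio _).inter_of_right _)
  set stage : ℕ → ℕ := fun j => Nat.find (hstage j)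
  have hstage_comp : Computable stage := by
    have hpow : Primrec fun p : ℕ × ℕ => 2 ^ (p.1 + 1) :=
      Primrec.nat_pow.comp (Primrec.const 2) (Primrec.succ.comp Primrec.fst)
    refine Computable.find (Computable.computablePred ?_) hstage
    exact (Primrec.nat_le.decide.to_comp).comp (hL.comp hpow.to_comp)
      (he.countBelow_setOf.to_comp.comp Computable.snd hpow.to_comp)
  set B : Set ℕ := {x | e (stage (Nat.log 2 x)) x = true}
  refine ⟨B, ?_, fun x hx => hsub _ hx, fun n => ?_⟩
  · exact ComputablePred.computable_iff.2 ⟨_, he.to_comp.comp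
      (hstage_comp.comp (Computable.nat_log one_lt_two)) Computable.id, rfl⟩
  · set E : ℕ → Set ℕ := fun j => {x | e (stage j) x = true}
    have hcover : (A \ B) ∩ Set.Iio n ⊆
        ⋃ j ∈ Finset.range (Nat.log 2 n + 1), (A \ E j) ∩ Set.Iio (2 ^ (j + 1)) := by
      rintro x ⟨hxAB, hxn⟩
      refine Set.mem_biUnion (x := Nat.log 2 x) ?_ ⟨hxAB, Nat.lt_pow_succ_log_self one_lt_two x⟩
      exact Finset.mem_range_succ_iff.2 (Nat.log_mono_right (le_of_lt hxn))
    calc countBelow (A \ B) n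
        ≤ (⋃ j ∈ Finset.range (Nat.log 2 n + 1), (A \ E j) ∩ Set.Iio (2 ^ (j + 1))).ncard :=
          Set.ncard_le_ncard hcover ((Finset.range _).finite_toSet.biUnion fun j _ =>
            (Set.finite_Iio _).inter_of_right _)
      _ ≤ ∑ j ∈ Finset.range (Nat.log 2 n + 1), countBelow (A \ E j) (2 ^ (j + 1)) :=
          Finset.set_ncard_biUnion_le _ _
      _ ≤ _ := Finset.sum_le_sum fun j _ => by
          rw [countBelow_sdiff (hsub _)]
          exact Nat.sub_le_sub_left (Nat.find_spec (hstage j)) _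

section Density

variable {A : Set ℕ} {d : ℝ}

theorem exists_mul_le_countBelow_add (hd : Tendsto (pdens A) atTop (𝓝 d)) {q : ℝ} (hqd : q < d) :
    ∃ K : ℕ, ∀ m, q * m ≤ countBelow A m + K := by
  obtain ⟨N, hN⟩ :=
    eventually_atTop.1 ((hd.eventually (lt_mem_nhds hqd)).and (eventually_gt_atTop 0))
  refine ⟨⌈max q 0 * N⌉₊, fun m => ?_⟩
  rcases lt_or_ge m N with hmN | hNm
  · have : q * m ≤ max q 0 * N :=
      mul_le_mul (le_max_left _ _) (by exact_mod_cast hmN.le) m.cast_nonneg (le_max_right _ _)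
    linarith [Nat.le_ceil (max q 0 * N), (countBelow A m).cast_nonneg (α := ℝ)]
  · obtain ⟨hq, hm⟩ := hN m hNm
    rw [pdens_eq_countBelow_div, lt_div_iff₀ (by exact_mod_cast hm)] at hq
    linarith [(⌈max q 0 * N⌉₊).cast_nonneg (α := ℝ)]

theorem exists_countBelow_le_mul_add (hd : Tendsto (pdens A) atTop (𝓝 d)) {r : ℝ} (hdr : d < r) :
    ∃ C : ℕ, ∀ m, (countBelow A m : ℝ) ≤ r * m + C := by
  have hr : 0 ≤ r := (ge_of_tendsto' hd (pdens_nonneg A)).trans hdr.le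
  obtain ⟨N, hN⟩ :=
    eventually_atTop.1 ((hd.eventually (gt_mem_nhds hdr)).and (eventually_gt_atTop 0))
  refine ⟨N, fun m => ?_⟩
  rcases lt_or_ge m N with hmN | hNm
  · have : (countBelow A m : ℝ) ≤ N := by exact_mod_cast (countBelow_le A m).trans hmN.le
    nlinarith [m.cast_nonneg (α := ℝ)]
  · obtain ⟨hr, hm⟩ := hN m hNm
    rw [pdens_eq_countBelow_div, div_lt_iff₀ (by exact_mod_cast hm)] at hr
    linarith [N.cast_nonneg (α := ℝ)]

theorem exists_computable_le_countBelow (hd : Tendsto (pdens A) atTop (𝓝 d)) {η : ℝ}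
    (hη : 0 < η) : ∃ L : ℕ → ℕ, Computable L ∧ (∀ m, L m ≤ countBelow A m) ∧
      ∃ C : ℝ, ∀ m, ((countBelow A m - L m : ℕ) : ℝ) ≤ η * m + C := by
  obtain ⟨q, hq, hqd⟩ := exists_rat_btwn (show d - η / 2 < d by linarith)
  obtain ⟨K, hK⟩ := exists_mul_le_countBelow_add hd hqd
  obtain ⟨C, hC⟩ := exists_countBelow_le_mul_add hd (show d < d + η / 2 by linarith)
  have hfloor : ∀ m : ℕ, ⌊(q : ℝ) * m⌋₊ ≤ countBelow A m + K := fun m =>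
    Nat.floor_le_of_le (by exact_mod_cast hK m)
  refine ⟨fun m : ℕ => ⌊(q : ℝ) * m⌋₊ - K,
    (Primrec.nat_sub.comp (Primrec.nat_floor_ratCast_mul q) (Primrec.const K)).to_comp,
    fun m => Nat.sub_le_iff_le_add.2 (hfloor m), C + K + 1, fun m => ?_⟩
  have hsub : ((countBelow A m - (⌊(q : ℝ) * m⌋₊ - K) : ℕ) : ℝ) + ⌊(q : ℝ) * m⌋₊ ≤
      countBelow A m + K := by
    have := hfloor m
    exact_mod_cast (by omega : countBelow A m - (⌊(q : ℝ) * m⌋₊ - K) + ⌊(q : ℝ) * m⌋₊ ≤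
      countBelow A m + K)
  have := Nat.lt_floor_add_one ((q : ℝ) * m)
  nlinarith [hC m, m.cast_nonneg (α := ℝ)]

end Density

theorem upperDensity_le_of_eventually_le {S : Set ℕ} {u : ℕ → ℝ} {c : ℝ}
    (h : ∀ᶠ n in atTop, pdens S n ≤ u n) (hu : Tendsto u atTop (𝓝 c)) : upperDensity S ≤ c :=
  (limsup_le_limsup h (isCoboundedUnder_le_of_le atTop (pdens_nonneg S))
    hu.isBoundedUnder_le).trans_eq hu.limsup_eq

theorem tendsto_log_two_add_one_div :
    Tendsto (fun n : ℕ => ((Nat.log 2 n : ℝ) + 1) / n) atTop (𝓝 0) := by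
  have hlog : Tendsto (Nat.log 2) atTop atTop :=
    tendsto_atTop_atTop.2 fun k => ⟨2 ^ k, fun n hn => Nat.le_log_of_pow_le one_lt_two hn⟩
  have hgeom : Tendsto (fun k : ℕ => ((k : ℝ) + 1) / 2 ^ k) atTop (𝓝 0) := by
    have h := (tendsto_pow_const_div_const_pow_of_one_lt 1 one_lt_two).add
      (tendsto_pow_const_div_const_pow_of_one_lt 0 one_lt_two)
    simpa [add_div] using h
  refine squeeze_zero' (Eventually.of_forall fun n => by positivity) ?_ (hgeom.comp hlog)
  filter_upwards [eventually_ne_atTop 0] with n hn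
  exact div_le_div_of_nonneg_left (by positivity) (by positivity)
    (by exact_mod_cast Nat.pow_log_le_self 2 hn)

theorem sum_two_pow_succ_le (k : ℕ) :
    ∑ j ∈ Finset.range (k + 1), (2 : ℝ) ^ (j + 1) ≤ 4 * 2 ^ k := by
  have h := geom_sum_eq (show (2 : ℝ) ≠ 1 by norm_num) (k + 1)
  simp only [pow_succ, ← Finset.sum_mul] at h ⊢
  rw [h]
  linarith [pow_pos (show (0 : ℝ) < 2 by norm_num) k]

theorem upperDensity_le_of_countBelow_le_sum {S : Set ℕ} {f : ℕ → ℕ} {δ C : ℝ} (hδ : 0 ≤ δ)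
    (hS : ∀ n, countBelow S n ≤ ∑ j ∈ Finset.range (Nat.log 2 n + 1), f (2 ^ (j + 1)))
    (hf : ∀ m, (f m : ℝ) ≤ δ * m + C) : upperDensity S ≤ 4 * δ := by
  refine upperDensity_le_of_eventually_le (u := fun n => 4 * δ + C * (((Nat.log 2 n : ℝ) + 1) / n))
    ?_ (by simpa using (tendsto_log_two_add_one_div.const_mul C).const_add (4 * δ))
  filter_upwards [eventually_ne_atTop 0] with n hn
  set k := Nat.log 2 n
  have hn' : (0 : ℝ) < n := by exact_mod_cast Nat.pos_of_ne_zero hn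
  have h2k : (2 : ℝ) ^ k ≤ n := by exact_mod_cast Nat.pow_log_le_self 2 hn
  have hcount : (countBelow S n : ℝ) ≤ δ * (4 * 2 ^ k) + (k + 1) * C := by
    calc (countBelow S n : ℝ) ≤ ∑ j ∈ Finset.range (k + 1), (f (2 ^ (j + 1)) : ℝ) := by
          exact_mod_cast hS n
      _ ≤ ∑ j ∈ Finset.range (k + 1), (δ * 2 ^ (j + 1) + C) :=
          Finset.sum_le_sum fun j _ => by exact_mod_cast hf (2 ^ (j + 1))
      _ = δ * ∑ j ∈ Finset.range (k + 1), (2 : ℝ) ^ (j + 1) + (k + 1) * C := by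
          simp [Finset.sum_add_distrib, Finset.mul_sum]
      _ ≤ δ * (4 * 2 ^ k) + (k + 1) * C := by gcongr; exact sum_two_pow_succ_le k
  have hexpand : (4 * δ + C * (((k : ℝ) + 1) / n)) * n = 4 * δ * n + (k + 1) * C := by
    field_simp
  rw [pdens_eq_countBelow_div, div_le_iff₀ hn', hexpand]
  nlinarith [mul_le_mul_of_nonneg_left h2k hδ]

theorem stmt15 (A : Set ℕ) (hA : REPred (· ∈ A)) (d : ℝ)
    (hd : Tendsto (pdens A) atTop (nhds d)) (ε : ℝ) (hε : 0 < ε) :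
    ∃ B : Set ℕ, ComputablePred (· ∈ B) ∧ B ⊆ A ∧ upperDensity (symmDiff A B) < ε := by
  obtain ⟨L, hL, hLA, C, hC⟩ := exists_computable_le_countBelow hd (by positivity : 0 < ε / 8)
  obtain ⟨B, hB, hBA, hcount⟩ := exists_computable_subset_countBelow_sdiff_le hA hL hLA
  refine ⟨B, hB, hBA, ?_⟩
  calc upperDensity (symmDiff A B) = upperDensity (A \ B) := by rw [symmDiff_of_ge hBA]
    _ ≤ 4 * (ε / 8) := upperDensity_le_of_countBelow_le_sum (by positivity) hcount hC
    _ < ε := by linarith
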